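/- Let A be a Noetherian integral domain of finite Krull dimension and let B be a nonzero commutative A-algebra which, as an A-module, is finitely generated and torsion-free. Then every associated prime of the B-module B is a minimal prime of B (so B has no embedded primes), and B is equidimensional: for every minimal prime 𝔮 of B the Krull dimension of B/𝔮 equals the Krull dimension of A; in particular the Krull dimension of B equals that of A. -/

import Mathlib

/-!
Torsion-freeness says that the nonzero elements of `A` map to nonzerodivisors of `B`, so every
prime of `B` made of zero divisors, associated or minimal, contracts to `(0)`. Since `B` is
integral over `A`, incomparability makes a prime over `(0)` minimal, and for a minimal prime `𝔮`
the extension `A ↪ B ⧸ 𝔮` is injective and integral, so incomparability and going up give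
`dim B ⧸ 𝔮 = dim A`.
-/

open Order
open scoped nonZeroDivisors

section IntegralExtension

variable {R S : Type*} [CommRing R] [CommRing S] [Algebra R S] [Algebra.IsIntegral R S]

theorem ringKrullDim_le_of_isIntegral : ringKrullDim S ≤ ringKrullDim R :=
  krullDim_le_of_strictMono (PrimeSpectrum.comap (algebraMap R S)) fun _ _ h ↦
    Ideal.IsIntegral.comap_lt_comap h

theorem ringKrullDim_le_of_isIntegral_of_injective (h : Function.Injective (algebraMap R S)) :
    ringKrullDim R ≤ ringKrullDim S := by
  refine iSup_le fun l ↦ ?_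
  have hker : (⊥ : Ideal S).comap (algebraMap R S) ≤ l.head.asIdeal := by
    rw [← RingHom.ker_eq_comap_bot, (RingHom.injective_iff_ker_eq_bot _).mp h]
    exact bot_le
  obtain ⟨P, -, hP, hPl⟩ := Ideal.exists_ideal_over_prime_of_isIntegral _ _ hker
  have : P.LiesOver l.head.asIdeal := ⟨hPl.symm⟩
  obtain ⟨L, hL, -⟩ := Ideal.exists_ltSeries_of_hasGoingUp l P
  exact le_iSup_of_le L (by rw [hL])

theorem ringKrullDim_eq_of_isIntegral_of_injective (h : Function.Injective (algebraMap R S)) :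
    ringKrullDim S = ringKrullDim R :=
  ringKrullDim_le_of_isIntegral.antisymm (ringKrullDim_le_of_isIntegral_of_injective h)

theorem ringKrullDim_quotient_eq_of_comap_eq_bot {I : Ideal S}
    (hI : I.comap (algebraMap R S) = ⊥) : ringKrullDim (S ⧸ I) = ringKrullDim R := by
  refine ringKrullDim_eq_of_isIntegral_of_injective <|
    (injective_iff_map_eq_zero _).mpr fun a ha ↦ ?_
  rwa [IsScalarTower.algebraMap_apply R S (S ⧸ I), Ideal.Quotient.algebraMap_eq,
    Ideal.Quotient.eq_zero_iff_mem, ← Ideal.mem_comap, hI, Ideal.mem_bot] at ha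

theorem Ideal.mem_minimalPrimes_of_comap_eq_bot {P : Ideal S} [P.IsPrime]
    (hP : P.comap (algebraMap R S) = ⊥) : P ∈ minimalPrimes S := by
  simpa [Ideal.under_def, hP] using Ideal.IsIntegral.mem_minimalPrimes_map_under (R := R) P

end IntegralExtension

theorem IsAssociatedPrime.disjoint_nonZeroDivisors {R : Type*} [CommRing R] {p : Ideal R}
    (hp : IsAssociatedPrime p R) : Disjoint (p : Set R) R⁰ := by
  obtain ⟨x, rfl⟩ := hp.2
  have hx : x ≠ 0 := by
    rintro rfl
    exact hp.1.ne_top (by simp)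
  refine Set.disjoint_left.mpr fun b ⟨n, hn⟩ hb ↦ hx ?_
  rw [Submodule.mem_colon_singleton, Submodule.mem_bot, smul_eq_mul] at hn
  exact (mul_left_mem_nonZeroDivisors_eq_zero_iff (pow_mem hb n)).mp hn

theorem Ideal.comap_eq_bot_of_disjoint_nonZeroDivisors {R S : Type*} [CommRing R] [CommRing S]
    [Algebra R S] (hreg : ∀ a : R, a ≠ 0 → algebraMap R S a ∈ S⁰) {I : Ideal S}
    (hI : Disjoint (I : Set S) S⁰) : I.comap (algebraMap R S) = ⊥ :=
  (Submodule.eq_bot_iff _).mpr fun a ha ↦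
    by_contra fun ha0 ↦ Set.disjoint_left.mp hI ha (hreg a ha0)

theorem stmt_1_general (A B : Type*) [CommRing A]
    [CommRing B] [Nontrivial B] [Algebra A B] [Module.Finite A B]
    (htf : ∀ a : A, a ≠ 0 → ∀ x : B, a • x = 0 → x = 0) :
    (∀ 𝔭 ∈ associatedPrimes B B, 𝔭 ∈ minimalPrimes B) ∧
    (∀ 𝔮 ∈ minimalPrimes B, ringKrullDim (B ⧸ 𝔮) = ringKrullDim A) ∧
    ringKrullDim B = ringKrullDim A := by
  have hreg (a : A) (ha : a ≠ 0) : algebraMap A B a ∈ B⁰ :=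
    mem_nonZeroDivisors_iff_left.mpr fun x hx ↦ htf a ha x (by rwa [Algebra.smul_def])
  have hcomap {I : Ideal B} (hI : Disjoint (I : Set B) B⁰) : I.comap (algebraMap A B) = ⊥ :=
    I.comap_eq_bot_of_disjoint_nonZeroDivisors hreg hI
  refine ⟨fun 𝔭 h𝔭 ↦ ?_, fun 𝔮 h𝔮 ↦ ?_, ?_⟩
  · have := h𝔭.isPrime
    exact Ideal.mem_minimalPrimes_of_comap_eq_bot (hcomap h𝔭.disjoint_nonZeroDivisors)
  · exact ringKrullDim_quotient_eq_of_comap_eq_bot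
      (hcomap (Ideal.disjoint_nonZeroDivisors_of_mem_minimalPrimes h𝔮))
  · exact ringKrullDim_eq_of_isIntegral_of_injective <| (injective_iff_map_eq_zero _).mpr
      fun a ha ↦ by_contra fun ha0 ↦ zero_notMem_nonZeroDivisors (ha ▸ hreg a ha0)

/-- Let `A` be a Noetherian integral domain of finite Krull dimension and
`B` a nonzero commutative `A`-algebra, finitely generated and torsion-free as an `A`-module.
Then every associated prime of the `B`-module `B` is a minimal prime (no embedded primes),
and `B` is equidimensional: each quotient by a minimal prime has Krull dimension equal to
that of `A`; in particular `dim B = dim A`. -/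
theorem stmt_1 (A B : Type*) [CommRing A] [IsDomain A] [IsNoetherianRing A]
    (hA : ringKrullDim A < ⊤)
    [CommRing B] [Nontrivial B] [Algebra A B] [Module.Finite A B]
    (htf : ∀ a : A, a ≠ 0 → ∀ x : B, a • x = 0 → x = 0) :
    (∀ 𝔭 ∈ associatedPrimes B B, 𝔭 ∈ minimalPrimes B) ∧
    (∀ 𝔮 ∈ minimalPrimes B, ringKrullDim (B ⧸ 𝔮) = ringKrullDim A) ∧
    ringKrullDim B = ringKrullDim A :=
  stmt_1_general A B htf
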